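/- Let A be a weakly idempotent complete exact category with enough projectives and injectives, and let (X, X^⊥) be a complete hereditary cotorsion pair in A. Then for any conflation A ↣ B ↠ C in A: (1) X-pd(A) ≤ max{X-pd(B), X-pd(C) − 1}, with equality if X-pd(B) ≠ X-pd(C) (where, if X-pd(C) = 0, the term X-pd(C) − 1 is interpreted as 0); (2) X-pd(B) ≤ max{X-pd(A), X-pd(C)}, with equality if X-pd(C) ≠ X-pd(A) + 1; (3) X-pd(C) ≤ max{X-pd(B), X-pd(A) + 1}, with equality if X-pd(B) ≠ X-pd(A). -/

import Mathlib

open CategoryTheory CategoryTheory.Limits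

universe w v u v₁ u₁ v₂ u₂ v₃ u₃

namespace CotorsionPaper

variable {A : Type u} [Category.{v} A] [Preadditive A]

/-- The data of an exact structure on an additive category: a distinguished class of
kernel-cokernel pairs, called conflations. -/
structure ExactStruct (A : Type u) [Category.{v} A] [Preadditive A] where
  /-- `IsConflation f g` means that `X ↣ Y ↠ Z` (via `f`, `g`) is a conflation. -/
  IsConflation : ∀ ⦃X Y Z : A⦄, (X ⟶ Y) → (Y ⟶ Z) → Prop

namespace ExactStruct

variable (E : ExactStruct A)

/-- A morphism is an inflation if it is the first map of some conflation. -/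
def Inflation {X Y : A} (f : X ⟶ Y) : Prop :=
  ∃ (Z : A) (g : Y ⟶ Z), E.IsConflation f g

/-- A morphism is a deflation if it is the second map of some conflation. -/
def Deflation {Y Z : A} (g : Y ⟶ Z) : Prop :=
  ∃ (X : A) (f : X ⟶ Y), E.IsConflation f g

/-- Quillen's axioms for an exact category (in Bühler's formulation). -/
structure IsExactCategory : Prop where
  comp_zero : ∀ ⦃X Y Z : A⦄ ⦃f : X ⟶ Y⦄ ⦃g : Y ⟶ Z⦄, E.IsConflation f g → f ≫ g = 0
  isKernel : ∀ ⦃X Y Z : A⦄ ⦃f : X ⟶ Y⦄ ⦃g : Y ⟶ Z⦄ (h : E.IsConflation f g),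
    Nonempty (IsLimit (KernelFork.ofι f (comp_zero h)))
  isCokernel : ∀ ⦃X Y Z : A⦄ ⦃f : X ⟶ Y⦄ ⦃g : Y ⟶ Z⦄ (h : E.IsConflation f g),
    Nonempty (IsColimit (CokernelCofork.ofπ g (comp_zero h)))
  conflation_of_iso : ∀ ⦃X Y Z X' Y' Z' : A⦄ ⦃f : X ⟶ Y⦄ ⦃g : Y ⟶ Z⦄
    (eX : X ≅ X') (eY : Y ≅ Y') (eZ : Z ≅ Z') ⦃f' : X' ⟶ Y'⦄ ⦃g' : Y' ⟶ Z'⦄,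
    E.IsConflation f g → eX.hom ≫ f' = f ≫ eY.hom → eY.hom ≫ g' = g ≫ eZ.hom →
    E.IsConflation f' g'
  id_inflation : ∀ X : A, E.Inflation (𝟙 X)
  id_deflation : ∀ X : A, E.Deflation (𝟙 X)
  inflation_comp : ∀ ⦃X Y Z : A⦄ ⦃f : X ⟶ Y⦄ ⦃g : Y ⟶ Z⦄,
    E.Inflation f → E.Inflation g → E.Inflation (f ≫ g)
  deflation_comp : ∀ ⦃X Y Z : A⦄ ⦃f : X ⟶ Y⦄ ⦃g : Y ⟶ Z⦄,
    E.Deflation f → E.Deflation g → E.Deflation (f ≫ g)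
  inflation_pushout : ∀ ⦃X Y X' : A⦄ ⦃f : X ⟶ Y⦄ (u : X ⟶ X'), E.Inflation f →
    ∃ (Y' : A) (f' : X' ⟶ Y') (v : Y ⟶ Y'), E.Inflation f' ∧ IsPushout f u v f'
  deflation_pullback : ∀ ⦃Y Z Z' : A⦄ ⦃g : Y ⟶ Z⦄ (u : Z' ⟶ Z), E.Deflation g →
    ∃ (Y' : A) (g' : Y' ⟶ Z') (v : Y' ⟶ Y), E.Deflation g' ∧ IsPullback g' v u g

end ExactStruct

/-- An additive category is weakly idempotent complete if every split monomorphism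
has a cokernel. -/
def WIC (A : Type u) [Category.{v} A] [Preadditive A] : Prop :=
  ∀ ⦃X Y : A⦄ (f : X ⟶ Y), (∃ r : Y ⟶ X, f ≫ r = 𝟙 X) → HasCokernel f

namespace ExactStruct

variable (E : ExactStruct A)

/-- An object is projective (relative to the exact structure) if maps out of it lift
along deflations. -/
def ProjObj (P : A) : Prop :=
  ∀ ⦃Y Z : A⦄ ⦃g : Y ⟶ Z⦄, E.Deflation g → ∀ h : P ⟶ Z, ∃ l : P ⟶ Y, l ≫ g = h

/-- An object is injective (relative to the exact structure) if maps into it extend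
along inflations. -/
def InjObj (I : A) : Prop :=
  ∀ ⦃X Y : A⦄ ⦃f : X ⟶ Y⦄, E.Inflation f → ∀ h : X ⟶ I, ∃ l : Y ⟶ I, f ≫ l = h

/-- The exact category has enough projectives: every object admits a deflation from
a projective object. -/
def EnoughProjectives : Prop :=
  ∀ M : A, ∃ (K P : A) (f : K ⟶ P) (g : P ⟶ M), E.ProjObj P ∧ E.IsConflation f g

/-- The exact category has enough injectives. -/
def EnoughInjectives : Prop :=
  ∀ M : A, ∃ (I C : A) (f : M ⟶ I) (g : I ⟶ C), E.InjObj I ∧ E.IsConflation f g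

/-- `Ext¹(M, Y) = 0`: every conflation `Y ↣ Eo ↠ M` splits. -/
def Ext1Zero (M Y : A) : Prop :=
  ∀ ⦃Eo : A⦄ ⦃f : Y ⟶ Eo⦄ ⦃g : Eo ⟶ M⦄, E.IsConflation f g → ∃ s : M ⟶ Eo, s ≫ g = 𝟙 M

end ExactStruct

/-- `ExtZero E n M Y` means `Extⁿ(M, Y) = 0` (defined by dimension shifting along
projective presentations; the value at `n = 0` is irrelevant and set to `True`). -/
def ExtZero (E : ExactStruct A) : ℕ → A → A → Prop
  | 0, _, _ => True
  | 1, M, Y => E.Ext1Zero M Y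
  | (n + 2), M, Y => ∀ ⦃K P : A⦄ ⦃f : K ⟶ P⦄ ⦃g : P ⟶ M⦄,
      E.ProjObj P → E.IsConflation f g → ExtZero E (n + 1) K Y

namespace ExactStruct

variable (E : ExactStruct A)

/-- The right Ext-orthogonal of a class of objects. -/
def rightPerp (X : Set A) : Set A := {M | ∀ C ∈ X, E.Ext1Zero C M}

/-- The left Ext-orthogonal of a class of objects. -/
def leftPerp (Y : Set A) : Set A := {M | ∀ L ∈ Y, E.Ext1Zero M L}

end ExactStruct

/-- `SyzOf E X n K M` : `K` is an `n`-th syzygy of `M`, i.e. there is an acyclic sequence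
`K ↣ X_{n-1} → ⋯ → X_0 ↠ M` with all middle terms in `X`. -/
def SyzOf (E : ExactStruct A) (X : Set A) : ℕ → A → A → Prop
  | 0, K, M => Nonempty (K ≅ M)
  | (n + 1), K, M => ∃ (K' X0 : A) (f : K' ⟶ X0) (g : X0 ⟶ M),
      X0 ∈ X ∧ E.IsConflation f g ∧ SyzOf E X n K K'

/-- `CosyzOf E Y n C M` : `C` is an `n`-th cosyzygy of `M` with respect to `Y`. -/
def CosyzOf (E : ExactStruct A) (Y : Set A) : ℕ → A → A → Prop
  | 0, C, M => Nonempty (M ≅ C)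
  | (n + 1), C, M => ∃ (C' Y0 : A) (f : M ⟶ Y0) (g : Y0 ⟶ C'),
      Y0 ∈ Y ∧ E.IsConflation f g ∧ CosyzOf E Y n C C'

namespace ExactStruct

variable (E : ExactStruct A)

/-- There is an acyclic sequence `X_n ↣ X_{n-1} → ⋯ → X_0 ↠ M` with all `X_i ∈ X`. -/
def pdLE (X : Set A) (n : ℕ) (M : A) : Prop := ∃ K, K ∈ X ∧ SyzOf E X n K M

/-- The `X`-projective dimension of `M`, valued in `ℕ∞`. -/
noncomputable def pdim (X : Set A) (M : A) : ℕ∞ :=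
  sInf ((fun m : ℕ => (m : ℕ∞)) '' {m : ℕ | E.pdLE X m M})

/-- `X_n`: the class of objects of `X`-projective dimension at most `n`. -/
def pdSet (X : Set A) (n : ℕ) : Set A := {M | E.pdim X M ≤ (n : ℕ∞)}

/-- There is an acyclic sequence `M ↣ Y^0 → ⋯ → Y^{n-1} ↠ Y^n` with all `Y^i ∈ Y`. -/
def idLE (Y : Set A) (n : ℕ) (M : A) : Prop := ∃ C, C ∈ Y ∧ CosyzOf E Y n C M

/-- The `Y`-injective dimension of `M`, valued in `ℕ∞`. -/
noncomputable def idim (Y : Set A) (M : A) : ℕ∞ :=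
  sInf ((fun m : ℕ => (m : ℕ∞)) '' {m : ℕ | E.idLE Y m M})

/-- `Y_n`: the class of objects of `Y`-injective dimension at most `n`. -/
def idSet (Y : Set A) (n : ℕ) : Set A := {M | E.idim Y M ≤ (n : ℕ∞)}

/-- `(X, Y)` is a cotorsion pair. -/
def IsCotorsionPair (X Y : Set A) : Prop :=
  E.rightPerp X = Y ∧ E.leftPerp Y = X

/-- `(X, Y)` is a complete cotorsion pair. -/
def IsCompleteCP (X Y : Set A) : Prop :=
  E.IsCotorsionPair X Y ∧
  (∀ M : A, ∃ (Y' X' : A) (f : Y' ⟶ X') (g : X' ⟶ M),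
    Y' ∈ Y ∧ X' ∈ X ∧ E.IsConflation f g) ∧
  (∀ M : A, ∃ (Y'' X'' : A) (f : M ⟶ Y'') (g : Y'' ⟶ X''),
    Y'' ∈ Y ∧ X'' ∈ X ∧ E.IsConflation f g)

/-- Heredity conditions: `X` is closed under kernels of deflations and `Y` is closed
under cokernels of inflations. -/
def HereditaryClasses (X Y : Set A) : Prop :=
  (∀ ⦃K B C : A⦄ ⦃f : K ⟶ B⦄ ⦃g : B ⟶ C⦄,
    E.IsConflation f g → B ∈ X → C ∈ X → K ∈ X) ∧
  (∀ ⦃K B C : A⦄ ⦃f : K ⟶ B⦄ ⦃g : B ⟶ C⦄,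
    E.IsConflation f g → K ∈ Y → B ∈ Y → C ∈ Y)

/-- `W` is a thick class: closed under direct summands and two-out-of-three
in conflations. -/
def IsThick (W : Set A) : Prop :=
  (∀ ⦃M N : A⦄ (s : M ⟶ N) (r : N ⟶ M), s ≫ r = 𝟙 M → N ∈ W → M ∈ W) ∧
  (∀ ⦃X Y Z : A⦄ ⦃f : X ⟶ Y⦄ ⦃g : Y ⟶ Z⦄, E.IsConflation f g →
    ((X ∈ W → Y ∈ W → Z ∈ W) ∧ (X ∈ W → Z ∈ W → Y ∈ W) ∧ (Y ∈ W → Z ∈ W → X ∈ W)))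

/-- `(C, W, F)` is a Hovey triple. -/
def IsHoveyTriple (C W F : Set A) : Prop :=
  E.IsCompleteCP (C ∩ W) F ∧ E.IsCompleteCP C (W ∩ F) ∧ E.IsThick W

/-- `(C, W, F)` is a hereditary Hovey triple. -/
def IsHereditaryHoveyTriple (C W F : Set A) : Prop :=
  E.IsHoveyTriple C W F ∧ E.HereditaryClasses (C ∩ W) F ∧ E.HereditaryClasses C (W ∩ F)

/-- A complete cotorsion pair `(X, Y)` is left extendable if `(X_n, X_n^⊥)` is a
complete cotorsion pair for every `n ≥ 0`. -/
def LeftExtendable (X Y : Set A) : Prop :=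
  E.IsCompleteCP X Y ∧
  ∀ n : ℕ, E.IsCompleteCP (E.pdSet X n) (E.rightPerp (E.pdSet X n))

/-- A complete cotorsion pair `(X, Y)` is right extendable if `(⊥(Y_n), Y_n)` is a
complete cotorsion pair for every `n ≥ 0`. -/
def RightExtendable (X Y : Set A) : Prop :=
  E.IsCompleteCP X Y ∧
  ∀ n : ℕ, E.IsCompleteCP (E.leftPerp (E.idSet Y n)) (E.idSet Y n)

/-- The class `Y` is the right Ext-orthogonal of a set (i.e. small family) of objects. -/
def SetGenerated (Y : Set A) : Prop :=
  ∃ (ι : Type v) (G : ι → A), Y = {M | ∀ i, E.Ext1Zero (G i) M}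

/-- Trivial cofibrations of the exact model structure associated to a Hovey triple:
inflations with cokernel in `C ∩ W`. -/
def TrivCof (C W : Set A) : MorphismProperty A := fun X Y f =>
  ∃ (Z : A) (g : Y ⟶ Z), E.IsConflation f g ∧ Z ∈ C ∩ W

/-- Trivial fibrations: deflations with kernel in `W ∩ F`. -/
def TrivFib (W F : Set A) : MorphismProperty A := fun Y Z g =>
  ∃ (K : A) (f : K ⟶ Y), E.IsConflation f g ∧ K ∈ W ∩ F

/-- Weak equivalences of the exact model structure associated to a Hovey triple. -/
def WeakEquiv (C W F : Set A) : MorphismProperty A := fun X Y f =>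
  ∃ (Z : A) (i : X ⟶ Z) (p : Z ⟶ Y), E.TrivCof C W i ∧ E.TrivFib W F p ∧ i ≫ p = f

/-- The homotopy category of the exact model structure associated to the Hovey triple
`(C, W, F)`: the localization of `A` at the weak equivalences. -/
abbrev Ho (C W F : Set A) := (E.WeakEquiv C W F).Localization

end ExactStruct

/-- The full subcategory on a class of objects. -/
abbrev SubCat (S : Set A) := ObjectProperty.FullSubcategory (fun X : A => X ∈ S)

/-- The stable relation: two maps are identified if their difference factors through
an object of `P`. -/
def stableRel (S P : Set A) : HomRel (SubCat S) := fun X Y f g =>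
  ∃ (Q : A) (u : X.obj ⟶ Q) (v : Q ⟶ Y.obj),
    Q ∈ P ∧ f.hom - g.hom = u ≫ v

/-- The stable category of the full subcategory on `S`, modulo maps factoring through
objects of `P`. -/
abbrev StableCat (S P : Set A) := CategoryTheory.Quotient (stableRel S P)

namespace ExactStruct

variable (E : ExactStruct A)

/-- `P0` is a projective object of the full exact subcategory on `S`. -/
def SubProjObj (S : Set A) (P0 : A) : Prop :=
  P0 ∈ S ∧ ∀ ⦃X Y Z : A⦄ ⦃f : X ⟶ Y⦄ ⦃g : Y ⟶ Z⦄,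
    E.IsConflation f g → X ∈ S → Y ∈ S → Z ∈ S →
    ∀ h : P0 ⟶ Z, ∃ l : P0 ⟶ Y, l ≫ g = h

/-- `I0` is an injective object of the full exact subcategory on `S`. -/
def SubInjObj (S : Set A) (I0 : A) : Prop :=
  I0 ∈ S ∧ ∀ ⦃X Y Z : A⦄ ⦃f : X ⟶ Y⦄ ⦃g : Y ⟶ Z⦄,
    E.IsConflation f g → X ∈ S → Y ∈ S → Z ∈ S →
    ∀ h : X ⟶ I0, ∃ l : Y ⟶ I0, f ≫ l = h

/-- The full exact subcategory on `S` is a Frobenius category whose class of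
projective-injective objects is `P`. -/
def IsFrobeniusSub (S P : Set A) : Prop :=
  (∀ Q0 : A, E.SubProjObj S Q0 ↔ Q0 ∈ S ∩ P) ∧
  (∀ Q0 : A, E.SubInjObj S Q0 ↔ Q0 ∈ S ∩ P) ∧
  (∀ M ∈ S, ∃ (K Q0 : A) (f : K ⟶ Q0) (g : Q0 ⟶ M),
    K ∈ S ∧ Q0 ∈ P ∧ E.IsConflation f g) ∧
  (∀ M ∈ S, ∃ (Q0 C0 : A) (f : M ⟶ Q0) (g : Q0 ⟶ C0),
    C0 ∈ S ∧ Q0 ∈ P ∧ E.IsConflation f g)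

end ExactStruct

/-- The canonical exact structure of an abelian category: conflations are the short
exact sequences. -/
def abelianES (A : Type u) [Category.{v} A] [Abelian A] : ExactStruct A where
  IsConflation X Y Z f g :=
    ∃ w : f ≫ g = 0, Mono f ∧ Epi g ∧ (ShortComplex.mk f g w).Exact

/-- A recollement (at the level of plain categories) of `T₂` relative to `T₁` and `T₃`. -/
structure Recollement (T₁ : Type u₁) (T₂ : Type u₂) (T₃ : Type u₃)
    [Category.{v₁} T₁] [Category.{v₂} T₂] [Category.{v₃} T₃] where
  i : T₁ ⥤ T₂
  iStar : T₂ ⥤ T₁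
  iShriek : T₂ ⥤ T₁
  j : T₂ ⥤ T₃
  jShriek : T₃ ⥤ T₂
  jStar : T₃ ⥤ T₂
  adj₁ : iStar ⊣ i
  adj₂ : i ⊣ iShriek
  adj₃ : jShriek ⊣ j
  adj₄ : j ⊣ jStar
  i_ff : i.FullyFaithful
  jShriek_ff : jShriek.FullyFaithful
  jStar_ff : jStar.FullyFaithful
  ker : ∀ X : T₂, Limits.IsZero (j.obj X) ↔ ∃ Y : T₁, Nonempty (X ≅ i.obj Y)

section Presentable

/-- A preorder is `λ`-directed if every subset of cardinality `< λ` has an upper bound. -/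
def IsLamDirected (lam : Cardinal.{v}) (J : Type v) [Preorder J] : Prop :=
  ∀ s : Set J, Cardinal.mk s < lam → ∃ u : J, ∀ j ∈ s, j ≤ u

/-- An object `X` is `λ`-presentable if `Hom(X, −)` preserves `λ`-directed colimits. -/
def IsPresentableObj (lam : Cardinal.{v}) (X : A) : Prop :=
  ∀ (J : Type v) [Preorder J], IsLamDirected lam J →
    ∀ (D : J ⥤ A) (c : Cocone D), IsColimit c →
      (∀ f : X ⟶ c.pt, ∃ (j : J) (g : X ⟶ D.obj j), g ≫ c.ι.app j = f) ∧
      (∀ (j j' : J) (g : X ⟶ D.obj j) (g' : X ⟶ D.obj j'),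
        g ≫ c.ι.app j = g' ≫ c.ι.app j' →
        ∃ (l : J) (hj : j ≤ l) (hj' : j' ≤ l),
          g ≫ D.map (homOfLE hj) = g' ≫ D.map (homOfLE hj'))

/-- `X` is a `λ`-directed colimit of objects isomorphic to members of the family `G`. -/
def IsLamDirColimitOf (lam : Cardinal.{v}) {ι : Type v} (G : ι → A) (X : A)
    (J : Type v) [Preorder J] : Prop :=
  IsLamDirected lam J ∧
  ∃ (D : J ⥤ A) (c : Cocone D), Nonempty (IsColimit c) ∧ Nonempty (c.pt ≅ X) ∧
    ∀ j : J, ∃ i : ι, Nonempty (D.obj j ≅ G i)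

/-- The category `A` is `λ`-accessible. -/
def IsAccessibleCat (A : Type u) [Category.{v} A] (lam : Cardinal.{v}) : Prop :=
  Cardinal.IsRegular lam ∧
  ∃ (ι : Type v) (G : ι → A),
    (∀ i, IsPresentableObj lam (G i)) ∧
    ∀ X : A, ∃ (J : Type v) (instJ : Preorder J),
      @IsLamDirColimitOf A _ lam ι G X J instJ

/-- The category `A` is locally presentable: cocomplete and accessible. -/
def IsLocallyPresentableCat (A : Type u) [Category.{v} A] : Prop :=
  HasColimitsOfSize.{v, v} A ∧ ∃ lam : Cardinal.{v}, IsAccessibleCat A lam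

end Presentable

end CotorsionPaper

namespace CotorsionPaper

/-!
For a complete hereditary cotorsion pair `(X, X^⊥)` the class `X` is resolving: it is closed
under isomorphisms, extensions and kernels of deflations, and every object is the target of a
deflation from an object of `X`. For a conflation `U ↣ D ↠ X₀` with `X₀ ∈ X`, the objects `U`
and `D` then have the same `X`-dimension, so any `X`-syzygy of an object of dimension `≤ n + 1`
has dimension `≤ n`. Pulling `A ↣ B ↠ C` back along a deflation `X₁ ↠ C` with `X₁ ∈ X` yields
the three inequalities by a simultaneous induction on the dimension; the equality cases are
arithmetic in `ℕ∞`.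
-/

theorem ENat.sInf_image_coe_le_coe_iff {P : ℕ → Prop} (hP : Monotone P) {n : ℕ} :
    sInf ((fun m : ℕ => (m : ℕ∞)) '' {m | P m}) ≤ n ↔ P n := by
  refine ⟨fun h => ?_, fun h => sInf_le ⟨n, h, rfl⟩⟩
  have hne : ((fun m : ℕ => (m : ℕ∞)) '' {m | P m}).Nonempty := by
    by_contra hemp
    simp [Set.not_nonempty_iff_eq_empty.mp hemp] at h
  obtain ⟨m, hm, hmn⟩ := csInf_mem hne
  rw [← hmn, Nat.cast_le] at h
  exact hP h hm

theorem ENat.le_of_forall_coe_le {a b : ℕ∞} (h : ∀ n : ℕ, b ≤ n → a ≤ n) : a ≤ b := by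
  induction b using ENat.recTopCoe with
  | top => exact le_top
  | coe b => exact h b le_rfl

theorem ENat.eq_max_of_le_max {a b c : ℕ∞} (h₁ : a ≤ max b (c - 1)) (h₂ : b ≤ max a c)
    (h₃ : c ≤ max b (a + 1)) :
    (b ≠ c → a = max b (c - 1)) ∧ (c ≠ a + 1 → b = max a c) ∧
      (b ≠ a → c = max b (a + 1)) := by
  induction a using ENat.recTopCoe <;> induction b using ENat.recTopCoe <;>
    induction c using ENat.recTopCoe <;> simp_all
  norm_cast at *
  simp only [← Nat.mono_cast.map_max, Nat.cast_inj]
  omega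

section

variable {A : Type u} [Category.{v} A] [Preadditive A] {E : ExactStruct A}

namespace ExactStruct

lemma mono_of_isConflation (hE : E.IsExactCategory) {X Y Z : A} {f : X ⟶ Y} {g : Y ⟶ Z}
    (h : E.IsConflation f g) : Mono f := by
  obtain ⟨hl⟩ := hE.isKernel h
  exact ⟨fun a b hab => Fork.IsLimit.hom_ext hl (by simpa using hab)⟩

lemma epi_of_isConflation (hE : E.IsExactCategory) {X Y Z : A} {f : X ⟶ Y} {g : Y ⟶ Z}
    (h : E.IsConflation f g) : Epi g := by
  obtain ⟨hc⟩ := hE.isCokernel h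
  exact ⟨fun a b hab => Cofork.IsColimit.hom_ext hc (by simpa using hab)⟩

lemma exists_lift_of_isConflation (hE : E.IsExactCategory) {X Y Z : A} {f : X ⟶ Y}
    {g : Y ⟶ Z} (h : E.IsConflation f g) {T : A} (τ : T ⟶ Y) (hτ : τ ≫ g = 0) :
    ∃ σ : T ⟶ X, σ ≫ f = τ := by
  obtain ⟨hl⟩ := hE.isKernel h
  exact ⟨_, (KernelFork.IsLimit.lift' hl τ hτ).2⟩

lemma exists_desc_of_isConflation (hE : E.IsExactCategory) {X Y Z : A} {f : X ⟶ Y}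
    {g : Y ⟶ Z} (h : E.IsConflation f g) {T : A} (τ : Y ⟶ T) (hτ : f ≫ τ = 0) :
    ∃ σ : Z ⟶ T, g ≫ σ = τ := by
  obtain ⟨hc⟩ := hE.isCokernel h
  exact ⟨_, (CokernelCofork.IsColimit.desc' hc τ hτ).2⟩

lemma isConflation_of_exists_lift (hE : E.IsExactCategory) {X X' Y Z : A} {f : X ⟶ Y}
    {g : Y ⟶ Z} (h : E.IsConflation f g) {c : X' ⟶ Y} [Mono c] (hc : c ≫ g = 0)
    (hlift : ∀ {T : A} (τ : T ⟶ Y), τ ≫ g = 0 → ∃ σ : T ⟶ X', σ ≫ c = τ) :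
    E.IsConflation c g := by
  have := mono_of_isConflation hE h
  obtain ⟨α, hα⟩ := hlift f (hE.comp_zero h)
  obtain ⟨β, hβ⟩ := exists_lift_of_isConflation hE h c hc
  let e : X ≅ X' :=
    ⟨α, β, by simp [← cancel_mono f, hα, hβ], by simp [← cancel_mono c, hα, hβ]⟩
  exact hE.conflation_of_iso e (Iso.refl Y) (Iso.refl Z) h (by simpa using hα) (by simp)

lemma isConflation_of_exists_desc (hE : E.IsExactCategory) {X Y Z Z' : A} {f : X ⟶ Y}
    {g : Y ⟶ Z} (h : E.IsConflation f g) {c : Y ⟶ Z'} [Epi c] (hc : f ≫ c = 0)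
    (hdesc : ∀ {T : A} (τ : Y ⟶ T), f ≫ τ = 0 → ∃ σ : Z' ⟶ T, c ≫ σ = τ) :
    E.IsConflation f c := by
  have := epi_of_isConflation hE h
  obtain ⟨α, hα⟩ := hdesc g (hE.comp_zero h)
  obtain ⟨β, hβ⟩ := exists_desc_of_isConflation hE h c hc
  let e : Z ≅ Z' := ⟨β, α, by simp [← cancel_epi g, reassoc_of% hβ, hα],
    by simp [← cancel_epi c, reassoc_of% hα, hβ]⟩
  exact hE.conflation_of_iso (Iso.refl X) (Iso.refl Y) e h (by simp) (by simpa using hβ.symm)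

lemma exists_section_of_retraction (hE : E.IsExactCategory) {X Y Z : A} {f : X ⟶ Y}
    {g : Y ⟶ Z} (h : E.IsConflation f g) {r : Y ⟶ X} (hr : f ≫ r = 𝟙 X) :
    ∃ s : Z ⟶ Y, s ≫ g = 𝟙 Z := by
  have := epi_of_isConflation hE h
  obtain ⟨s, hs⟩ := exists_desc_of_isConflation hE h (𝟙 Y - r ≫ f)
    (by simp [Preadditive.comp_sub, reassoc_of% hr])
  refine ⟨s, ?_⟩
  rw [← cancel_epi g, reassoc_of% hs]
  simp [Preadditive.sub_comp, hE.comp_zero h]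

lemma exists_retraction_of_section (hE : E.IsExactCategory) {X Y Z : A} {f : X ⟶ Y}
    {g : Y ⟶ Z} (h : E.IsConflation f g) {s : Z ⟶ Y} (hs : s ≫ g = 𝟙 Z) :
    ∃ r : Y ⟶ X, f ≫ r = 𝟙 X := by
  have := mono_of_isConflation hE h
  obtain ⟨r, hr⟩ := exists_lift_of_isConflation hE h (𝟙 Y - g ≫ s)
    (by simp [Preadditive.sub_comp, hs])
  refine ⟨r, ?_⟩
  rw [← cancel_mono f, Category.assoc, hr]
  simp [Preadditive.comp_sub, reassoc_of% (hE.comp_zero h)]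

lemma exists_isConflation_isPullback (hE : E.IsExactCategory) {K Y Z Z' : A} {k : K ⟶ Y}
    {q : Y ⟶ Z} (h : E.IsConflation k q) (t : Z' ⟶ Z) :
    ∃ (P : A) (k' : K ⟶ P) (q' : P ⟶ Z') (v : P ⟶ Y),
      E.IsConflation k' q' ∧ IsPullback q' v t q ∧ k' ≫ v = k := by
  obtain ⟨P, q', v, ⟨K₀, k₀, h₀⟩, hpb⟩ := hE.deflation_pullback t ⟨K, k, h⟩
  have := mono_of_isConflation hE h
  have hk : (0 : K ⟶ Z') ≫ t = k ≫ q := by simp [hE.comp_zero h]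
  have hk' : hpb.lift 0 k hk ≫ v = k := hpb.lift_snd _ _ _
  have := mono_of_mono_fac hk'
  refine ⟨P, _, q', v, isConflation_of_exists_lift hE h₀ (by simp) fun τ hτ => ?_, hpb, hk'⟩
  obtain ⟨σ, hσ⟩ := exists_lift_of_isConflation hE h (τ ≫ v)
    (by rw [Category.assoc, ← hpb.w, reassoc_of% hτ, zero_comp])
  exact ⟨σ, hpb.hom_ext (by simp [hτ]) (by simp [hk', hσ])⟩

lemma isConflation_comp_of_isPullback (hE : E.IsExactCategory) {K Y B C A₁ P : A}
    {u : K ⟶ Y} {p : Y ⟶ B} {f : A₁ ⟶ B} {g : B ⟶ C} {q' : P ⟶ A₁} {v : P ⟶ Y}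
    (hup : E.IsConflation u p) (hfg : E.IsConflation f g) (hpb : IsPullback q' v f p) :
    E.IsConflation v (p ≫ g) := by
  obtain ⟨K₀, k₀, h₀⟩ := hE.deflation_comp ⟨_, _, hup⟩ ⟨_, _, hfg⟩
  have := mono_of_isConflation hE hfg
  have := hpb.mono_snd_of_mono
  refine isConflation_of_exists_lift hE h₀ ?_ fun τ hτ => ?_
  · rw [← reassoc_of% hpb.w, hE.comp_zero hfg, comp_zero]
  · obtain ⟨σ, hσ⟩ := exists_lift_of_isConflation hE hfg (τ ≫ p) (by simpa using hτ)
    exact ⟨hpb.lift σ τ hσ, hpb.lift_snd _ _ _⟩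

lemma exists_isConflation_isPushout (hE : E.IsExactCategory) {K Y Z K' : A} {k : K ⟶ Y}
    {q : Y ⟶ Z} (h : E.IsConflation k q) (t : K ⟶ K') :
    ∃ (P : A) (k' : K' ⟶ P) (w : Y ⟶ P) (q' : P ⟶ Z),
      E.IsConflation k' q' ∧ IsPushout k t w k' ∧ w ≫ q' = q := by
  obtain ⟨P, k', w, ⟨Z₀, c₀, h₀⟩, hpo⟩ := hE.inflation_pushout t ⟨Z, q, h⟩
  have := epi_of_isConflation hE h
  have hk : k ≫ q = t ≫ (0 : K' ⟶ Z) := by simp [hE.comp_zero h]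
  have hq' : w ≫ hpo.desc q 0 hk = q := hpo.inl_desc _ _ _
  have := epi_of_epi_fac hq'
  refine ⟨P, k', w, _, isConflation_of_exists_desc hE h₀ (by simp) fun τ hτ => ?_, hpo, hq'⟩
  obtain ⟨σ, hσ⟩ := exists_desc_of_isConflation hE h (w ≫ τ)
    (by rw [← Category.assoc, hpo.w, Category.assoc, hτ, comp_zero])
  exact ⟨σ, hpo.hom_ext (by simp [reassoc_of% hq', hσ]) (by simp [hτ])⟩

lemma exists_isConflation_pullback (hE : E.IsExactCategory) {K K' X₀ X₀' M : A}
    {k : K ⟶ X₀} {q : X₀ ⟶ M} {k' : K' ⟶ X₀'} {q' : X₀' ⟶ M}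
    (h : E.IsConflation k q) (h' : E.IsConflation k' q') :
    ∃ (P : A) (v : P ⟶ X₀) (w : P ⟶ X₀') (φ : K ⟶ P) (ψ : K' ⟶ P),
      E.IsConflation φ w ∧ E.IsConflation ψ v := by
  obtain ⟨P, φ, w, v, hφw, hpb, -⟩ := exists_isConflation_isPullback hE h q'
  obtain ⟨P', ψ, v', w', hψv', hpb', -⟩ := exists_isConflation_isPullback hE h' q
  let e : P' ≅ P := hpb'.isoIsPullback _ _ hpb.flip
  refine ⟨P, v, w, φ, ψ ≫ e.hom, hφw, hE.conflation_of_iso (Iso.refl K') e (Iso.refl X₀) hψv'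
    (by simp) ?_⟩
  simp [e, IsPullback.isoIsPullback_hom_fst]

lemma ext1Zero_of_isConflation (hE : E.IsExactCategory) {A₁ B₁ C₁ Y : A} {f : A₁ ⟶ B₁}
    {g : B₁ ⟶ C₁} (hfg : E.IsConflation f g) (hA : E.Ext1Zero A₁ Y) (hC : E.Ext1Zero C₁ Y) :
    E.Ext1Zero B₁ Y := by
  intro Eo u p hup
  obtain ⟨P, u', p', v, hP, hpb, huv⟩ := exists_isConflation_isPullback hE hup f
  obtain ⟨σ, hσ⟩ := hA hP
  obtain ⟨ρ, hρ⟩ := exists_retraction_of_section hE hP hσ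
  obtain ⟨Q, u'', w, q'', hQ, hpo, -⟩ :=
    exists_isConflation_isPushout hE (isConflation_comp_of_isPullback hE hup hfg hpb) ρ
  obtain ⟨τ, hτ⟩ := hC hQ
  obtain ⟨ρ', hρ'⟩ := exists_retraction_of_section hE hQ hτ
  -- `w ≫ ρ'` extends the retraction `ρ` of the pulled-back conflation to all of `Eo`
  refine exists_section_of_retraction hE hup (r := w ≫ ρ') ?_
  rw [← huv, Category.assoc, reassoc_of% hpo.w, hρ', Category.comp_id, hρ]

lemma ext1Zero_of_iso (hE : E.IsExactCategory) {M M' Y : A} (e : M' ≅ M)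
    (h : E.Ext1Zero M Y) : E.Ext1Zero M' Y := by
  intro Eo u p hup
  obtain ⟨s, hs⟩ := h (hE.conflation_of_iso (Iso.refl Y) (Iso.refl Eo) e
    (f' := u) (g' := p ≫ e.hom) hup (by simp) (by simp))
  exact ⟨e.hom ≫ s, by simp [← cancel_mono e.hom, hs]⟩

/-- A resolving class, with "generating" in place of "contains the projectives". -/
structure IsResolving (E : ExactStruct A) (X : Set A) : Prop where
  mem_of_iso : ∀ ⦃M M' : A⦄, (M' ≅ M) → M ∈ X → M' ∈ X
  mem_of_isConflation_mid : ∀ ⦃K B C : A⦄ ⦃f : K ⟶ B⦄ ⦃g : B ⟶ C⦄,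
    E.IsConflation f g → K ∈ X → C ∈ X → B ∈ X
  mem_of_isConflation_left : ∀ ⦃K B C : A⦄ ⦃f : K ⟶ B⦄ ⦃g : B ⟶ C⦄,
    E.IsConflation f g → B ∈ X → C ∈ X → K ∈ X
  generating : ∀ M : A, ∃ (K X₀ : A) (f : K ⟶ X₀) (g : X₀ ⟶ M),
    X₀ ∈ X ∧ E.IsConflation f g

lemma isResolving_of_isCompleteCP (hE : E.IsExactCategory) {X Y : Set A}
    (hcomp : E.IsCompleteCP X Y) (hher : E.HereditaryClasses X Y) : E.IsResolving X where
  mem_of_iso M M' e hM := by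
    rw [← hcomp.1.2] at hM ⊢
    exact fun L hL => ext1Zero_of_iso hE e (hM L hL)
  mem_of_isConflation_mid K B C f g hfg hK hC := by
    rw [← hcomp.1.2] at hK hC ⊢
    exact fun L hL => ext1Zero_of_isConflation hE hfg (hK L hL) (hC L hL)
  mem_of_isConflation_left := hher.1
  generating M := by
    obtain ⟨K, X₀, f, g, -, hX₀, hfg⟩ := hcomp.2.1 M
    exact ⟨K, X₀, f, g, hX₀, hfg⟩

section Dimension

variable {X : Set A}

lemma pdLE_zero_iff (hX : E.IsResolving X) {M : A} : E.pdLE X 0 M ↔ M ∈ X :=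
  ⟨fun ⟨_, hK, ⟨e⟩⟩ => hX.mem_of_iso e.symm hK, fun hM => ⟨M, hM, ⟨Iso.refl M⟩⟩⟩

lemma pdLE_succ_iff {n : ℕ} {M : A} :
    E.pdLE X (n + 1) M ↔ ∃ (K X₀ : A) (f : K ⟶ X₀) (g : X₀ ⟶ M),
      X₀ ∈ X ∧ E.IsConflation f g ∧ E.pdLE X n K := by
  constructor
  · rintro ⟨L, hL, K, X₀, f, g, hX₀, hfg, hsyz⟩
    exact ⟨K, X₀, f, g, hX₀, hfg, L, hL, hsyz⟩
  · rintro ⟨K, X₀, f, g, hX₀, hfg, L, hL, hsyz⟩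
    exact ⟨L, hL, K, X₀, f, g, hX₀, hfg, hsyz⟩

lemma pdLE_succ_of_pdLE (hE : E.IsExactCategory) (hX : E.IsResolving X) {n : ℕ} {M : A}
    (h : E.pdLE X n M) : E.pdLE X (n + 1) M := by
  induction n generalizing M with
  | zero =>
    obtain ⟨K, k, hk⟩ := hE.id_deflation M
    have hM := (pdLE_zero_iff hX).mp h
    exact pdLE_succ_iff.mpr ⟨K, M, k, 𝟙 M, hM, hk,
      (pdLE_zero_iff hX).mpr (hX.mem_of_isConflation_left hk hM hM)⟩
  | succ n ih =>
    obtain ⟨K, X₀, f, g, hX₀, hfg, hK⟩ := pdLE_succ_iff.mp h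
    exact pdLE_succ_iff.mpr ⟨K, X₀, f, g, hX₀, hfg, ih hK⟩

lemma pdim_le_coe_iff (hE : E.IsExactCategory) (hX : E.IsResolving X) {n : ℕ} {M : A} :
    E.pdim X M ≤ n ↔ E.pdLE X n M :=
  ENat.sInf_image_coe_le_coe_iff (P := fun m => E.pdLE X m M)
    (monotone_nat_of_le_succ fun _ => pdLE_succ_of_pdLE hE hX)

lemma pdLE_of_isConflation_of_pdLE_succ_of_iff (hE : E.IsExactCategory) {n : ℕ}
    (hiff : ∀ {U D X₀ : A} {f : U ⟶ D} {g : D ⟶ X₀}, X₀ ∈ X → E.IsConflation f g →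
      (E.pdLE X n U ↔ E.pdLE X n D))
    {K X₁ M : A} {k : K ⟶ X₁} {q : X₁ ⟶ M} (hX₁ : X₁ ∈ X) (hkq : E.IsConflation k q)
    (hM : E.pdLE X (n + 1) M) : E.pdLE X n K := by
  obtain ⟨K₀, X₀, k₀, q₀, hX₀, hkq₀, hK₀⟩ := pdLE_succ_iff.mp hM
  obtain ⟨P, _, _, φ, ψ, hφ, hψ⟩ := exists_isConflation_pullback hE hkq₀ hkq
  exact (hiff hX₀ hψ).mpr ((hiff hX₁ hφ).mp hK₀)

lemma pdLE_iff_of_isConflation_of_mem (hE : E.IsExactCategory) (hX : E.IsResolving X)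
    (n : ℕ) {U D X₀ : A} {f : U ⟶ D} {g : D ⟶ X₀} (hX₀ : X₀ ∈ X)
    (hfg : E.IsConflation f g) : E.pdLE X n U ↔ E.pdLE X n D := by
  induction n generalizing U D X₀ with
  | zero =>
    rw [pdLE_zero_iff hX, pdLE_zero_iff hX]
    exact ⟨fun hU => hX.mem_of_isConflation_mid hfg hU hX₀,
      fun hD => hX.mem_of_isConflation_left hfg hD hX₀⟩
  | succ n ih =>
    obtain ⟨Y, X₁, a, b, hX₁, hab⟩ := hX.generating D
    obtain ⟨P, a', p', v, hap', hpb, -⟩ := exists_isConflation_isPullback hE hab f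
    have hP : P ∈ X := hX.mem_of_isConflation_left
      (isConflation_comp_of_isPullback hE hab hfg hpb) hX₁ hX₀
    constructor
    · intro hU
      exact pdLE_succ_iff.mpr ⟨Y, X₁, a, b, hX₁, hab,
        pdLE_of_isConflation_of_pdLE_succ_of_iff hE ih hP hap' hU⟩
    · intro hD
      exact pdLE_succ_iff.mpr ⟨Y, P, a', p', hP, hap',
        pdLE_of_isConflation_of_pdLE_succ_of_iff hE ih hX₁ hab hD⟩

lemma pdLE_of_isConflation_of_pdLE_succ (hE : E.IsExactCategory) (hX : E.IsResolving X)
    {n : ℕ} {K X₁ M : A} {k : K ⟶ X₁} {q : X₁ ⟶ M} (hX₁ : X₁ ∈ X)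
    (hkq : E.IsConflation k q) (hM : E.pdLE X (n + 1) M) : E.pdLE X n K :=
  pdLE_of_isConflation_of_pdLE_succ_of_iff hE (pdLE_iff_of_isConflation_of_mem hE hX n) hX₁ hkq hM

/-- `P` is the pullback of `g` along `b`; the conflation `A₁ ↣ P ↠ X₁` gives it the dimension
of `A₁`. -/
lemma exists_isConflation_pullback_precover (hE : E.IsExactCategory) (hX : E.IsResolving X)
    {A₁ B₁ C₁ : A} {f : A₁ ⟶ B₁} {g : B₁ ⟶ C₁} (hfg : E.IsConflation f g) :
    ∃ (Y X₁ P : A) (a : Y ⟶ X₁) (b : X₁ ⟶ C₁) (ψ : Y ⟶ P) (v : P ⟶ B₁),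
      X₁ ∈ X ∧ E.IsConflation a b ∧ E.IsConflation ψ v ∧
        ∀ n, E.pdLE X n A₁ ↔ E.pdLE X n P := by
  obtain ⟨Y, X₁, a, b, hX₁, hab⟩ := hX.generating C₁
  obtain ⟨P, v, _, _, ψ, hφ, hψ⟩ := exists_isConflation_pullback hE hfg hab
  exact ⟨Y, X₁, P, a, b, ψ, v, hX₁, hab, hψ,
    fun n => pdLE_iff_of_isConflation_of_mem hE hX n hX₁ hφ⟩

lemma pdLE_left_of_isConflation_of_mid (hE : E.IsExactCategory) (hX : E.IsResolving X)
    {n : ℕ} (hmid : ∀ {A₁ B₁ C₁ : A} {f : A₁ ⟶ B₁} {g : B₁ ⟶ C₁}, E.IsConflation f g →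
      E.pdLE X n A₁ → E.pdLE X n C₁ → E.pdLE X n B₁)
    {A₁ B₁ C₁ : A} {f : A₁ ⟶ B₁} {g : B₁ ⟶ C₁} (hfg : E.IsConflation f g)
    (hB : E.pdLE X n B₁) (hC : E.pdLE X (n + 1) C₁) : E.pdLE X n A₁ := by
  obtain ⟨Y, X₁, P, a, b, ψ, v, hX₁, hab, hψv, hP⟩ :=
    exists_isConflation_pullback_precover hE hX hfg
  exact (hP n).mpr (hmid hψv (pdLE_of_isConflation_of_pdLE_succ hE hX hX₁ hab hC) hB)

lemma pdLE_right_of_isConflation_of_left (hE : E.IsExactCategory) (hX : E.IsResolving X)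
    {n : ℕ} (hleft : ∀ {A₁ B₁ C₁ : A} {f : A₁ ⟶ B₁} {g : B₁ ⟶ C₁}, E.IsConflation f g →
      E.pdLE X n B₁ → E.pdLE X (n + 1) C₁ → E.pdLE X n A₁)
    {A₁ B₁ C₁ : A} {f : A₁ ⟶ B₁} {g : B₁ ⟶ C₁} (hfg : E.IsConflation f g)
    (hA : E.pdLE X n A₁) (hB : E.pdLE X (n + 1) B₁) : E.pdLE X (n + 1) C₁ := by
  obtain ⟨Y, X₁, P, a, b, ψ, v, hX₁, hab, hψv, hP⟩ :=
    exists_isConflation_pullback_precover hE hX hfg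
  exact pdLE_succ_iff.mpr ⟨Y, X₁, a, b, hX₁, hab, hleft hψv ((hP n).mp hA) hB⟩

lemma pdLE_mid_of_isConflation (hE : E.IsExactCategory) (hX : E.IsResolving X) (n : ℕ)
    {A₁ B₁ C₁ : A} {f : A₁ ⟶ B₁} {g : B₁ ⟶ C₁} (hfg : E.IsConflation f g)
    (hA : E.pdLE X n A₁) (hC : E.pdLE X n C₁) : E.pdLE X n B₁ := by
  induction n generalizing A₁ B₁ C₁ with
  | zero =>
    rw [pdLE_zero_iff hX] at hA hC ⊢
    exact hX.mem_of_isConflation_mid hfg hA hC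
  | succ n ih =>
    obtain ⟨Y, X₁, P, a, b, ψ, v, hX₁, hab, hψv, hP⟩ :=
      exists_isConflation_pullback_precover hE hX hfg
    exact pdLE_right_of_isConflation_of_left hE hX
      (pdLE_left_of_isConflation_of_mid hE hX ih) hψv
      (pdLE_of_isConflation_of_pdLE_succ hE hX hX₁ hab hC) ((hP (n + 1)).mp hA)

lemma pdLE_left_of_isConflation (hE : E.IsExactCategory) (hX : E.IsResolving X) {n : ℕ}
    {A₁ B₁ C₁ : A} {f : A₁ ⟶ B₁} {g : B₁ ⟶ C₁} (hfg : E.IsConflation f g)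
    (hB : E.pdLE X n B₁) (hC : E.pdLE X (n + 1) C₁) : E.pdLE X n A₁ :=
  pdLE_left_of_isConflation_of_mid hE hX (pdLE_mid_of_isConflation hE hX n) hfg hB hC

lemma pdLE_right_of_isConflation (hE : E.IsExactCategory) (hX : E.IsResolving X) {n : ℕ}
    {A₁ B₁ C₁ : A} {f : A₁ ⟶ B₁} {g : B₁ ⟶ C₁} (hfg : E.IsConflation f g)
    (hA : E.pdLE X n A₁) (hB : E.pdLE X (n + 1) B₁) : E.pdLE X (n + 1) C₁ :=
  pdLE_right_of_isConflation_of_left hE hX (pdLE_left_of_isConflation hE hX) hfg hA hB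

lemma pdim_left_le (hE : E.IsExactCategory) (hX : E.IsResolving X) {A₁ B₁ C₁ : A}
    {f : A₁ ⟶ B₁} {g : B₁ ⟶ C₁} (hfg : E.IsConflation f g) :
    E.pdim X A₁ ≤ max (E.pdim X B₁) (E.pdim X C₁ - 1) := by
  refine ENat.le_of_forall_coe_le fun n hn => ?_
  obtain ⟨hB, hC⟩ := max_le_iff.mp hn
  rw [tsub_le_iff_right, ← Nat.cast_one, ← Nat.cast_add] at hC
  rw [pdim_le_coe_iff hE hX] at hB hC ⊢
  exact pdLE_left_of_isConflation hE hX hfg hB hC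

lemma pdim_mid_le (hE : E.IsExactCategory) (hX : E.IsResolving X) {A₁ B₁ C₁ : A}
    {f : A₁ ⟶ B₁} {g : B₁ ⟶ C₁} (hfg : E.IsConflation f g) :
    E.pdim X B₁ ≤ max (E.pdim X A₁) (E.pdim X C₁) := by
  refine ENat.le_of_forall_coe_le fun n hn => ?_
  obtain ⟨hA, hC⟩ := max_le_iff.mp hn
  rw [pdim_le_coe_iff hE hX] at hA hC ⊢
  exact pdLE_mid_of_isConflation hE hX n hfg hA hC

lemma pdim_right_le (hE : E.IsExactCategory) (hX : E.IsResolving X) {A₁ B₁ C₁ : A}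
    {f : A₁ ⟶ B₁} {g : B₁ ⟶ C₁} (hfg : E.IsConflation f g) :
    E.pdim X C₁ ≤ max (E.pdim X B₁) (E.pdim X A₁ + 1) := by
  refine ENat.le_of_forall_coe_le fun n hn => ?_
  obtain ⟨hB, hA⟩ := max_le_iff.mp hn
  cases n with
  | zero => simp at hA
  | succ n =>
    rw [Nat.cast_add, Nat.cast_one, ENat.add_le_add_iff_right ENat.one_ne_top] at hA
    rw [pdim_le_coe_iff hE hX] at hA hB ⊢
    exact pdLE_right_of_isConflation hE hX hfg hA hB

end Dimension

end ExactStruct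

end

theorem statement1_general {A : Type u} [Category.{v} A] [Preadditive A]
    (E : ExactStruct A) (hE : E.IsExactCategory)
    (X : Set A)
    (hcomp : E.IsCompleteCP X (E.rightPerp X))
    (hher : E.HereditaryClasses X (E.rightPerp X))
    {A₀ B₀ C₀ : A} (f : A₀ ⟶ B₀) (g : B₀ ⟶ C₀) (hconf : E.IsConflation f g) :
    (E.pdim X A₀ ≤ max (E.pdim X B₀) (E.pdim X C₀ - 1) ∧
      (E.pdim X B₀ ≠ E.pdim X C₀ →
        E.pdim X A₀ = max (E.pdim X B₀) (E.pdim X C₀ - 1))) ∧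
    (E.pdim X B₀ ≤ max (E.pdim X A₀) (E.pdim X C₀) ∧
      (E.pdim X C₀ ≠ E.pdim X A₀ + 1 →
        E.pdim X B₀ = max (E.pdim X A₀) (E.pdim X C₀))) ∧
    (E.pdim X C₀ ≤ max (E.pdim X B₀) (E.pdim X A₀ + 1) ∧
      (E.pdim X B₀ ≠ E.pdim X A₀ →
        E.pdim X C₀ = max (E.pdim X B₀) (E.pdim X A₀ + 1))) := by
  have hX := E.isResolving_of_isCompleteCP hE hcomp hher
  have h₁ := E.pdim_left_le hE hX hconf
  have h₂ := E.pdim_mid_le hE hX hconf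
  have h₃ := E.pdim_right_le hE hX hconf
  obtain ⟨e₁, e₂, e₃⟩ := ENat.eq_max_of_le_max h₁ h₂ h₃
  exact ⟨⟨h₁, e₁⟩, ⟨h₂, e₂⟩, ⟨h₃, e₃⟩⟩

/-- Behaviour of the `X`-projective dimension on conflations,
for a complete hereditary cotorsion pair `(X, X^⊥)` in a WIC exact category with
enough projectives and injectives.  (Subtraction and addition are taken in `ℕ∞`;
truncated subtraction realizes the convention that `X-pd(C) - 1` is `0` when
`X-pd(C) = 0`.) -/
theorem statement1 {A : Type u} [Category.{v} A] [Preadditive A]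
    (E : ExactStruct A) (hE : E.IsExactCategory) (hwic : WIC A)
    (hproj : E.EnoughProjectives) (hinj : E.EnoughInjectives)
    (X : Set A)
    (hcomp : E.IsCompleteCP X (E.rightPerp X))
    (hher : E.HereditaryClasses X (E.rightPerp X))
    {A₀ B₀ C₀ : A} (f : A₀ ⟶ B₀) (g : B₀ ⟶ C₀) (hconf : E.IsConflation f g) :
    (E.pdim X A₀ ≤ max (E.pdim X B₀) (E.pdim X C₀ - 1) ∧
      (E.pdim X B₀ ≠ E.pdim X C₀ →
        E.pdim X A₀ = max (E.pdim X B₀) (E.pdim X C₀ - 1))) ∧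
    (E.pdim X B₀ ≤ max (E.pdim X A₀) (E.pdim X C₀) ∧
      (E.pdim X C₀ ≠ E.pdim X A₀ + 1 →
        E.pdim X B₀ = max (E.pdim X A₀) (E.pdim X C₀))) ∧
    (E.pdim X C₀ ≤ max (E.pdim X B₀) (E.pdim X A₀ + 1) ∧
      (E.pdim X B₀ ≠ E.pdim X A₀ →
        E.pdim X C₀ = max (E.pdim X B₀) (E.pdim X A₀ + 1))) :=
  statement1_general E hE X hcomp hher f g hconf

end CotorsionPaper
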